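/- In the setting of the Darboux transform above, with η(x,λ) = φ(x,λ) − φ_α(x)K(x)T(x,λ) and T(x,λ) = ∫₀^x φ_α* φ(·,λ) dt, the transformed Gram matrix satisfies ∫₀^x η*(t,λ)η(t,λ) dt = ∫₀^x φ*(t,λ)φ(t,λ) dt − T*(x,λ) K(x) T(x,λ) for all x ∈ [0,1] and real λ. -/

import Mathlib

open Matrix

/-!
Write `ψ = φ_α`, `S(x) = ∫₀ˣ ψ*ψ` and `F(x) = T*(x) K(x) T(x)`. Since `S' = ψ*ψ`, the derivative
of the inverse gives `K' = -K ψ*ψ K`, and the push-through identity `(1 + AS) A = A (1 + SA)`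
together with `A* = A`, `S* = S` shows `K* = K`. With `T' = ψ*φ`, the product rule then turns
`F'` into `φ*φ - η*η` on `[0, 1]`, and the identity follows by integrating from `0`, where
`T` vanishes.
-/

-- Matrices carry no global norm; all norms give the same derivatives, and this one is an
-- algebra norm.
attribute [local instance] Matrix.linftyOpNormedAddCommGroup Matrix.linftyOpNormedSpace
  Matrix.linftyOpNormedRing Matrix.linftyOpNormedAlgebra

variable {m n : Type*}

theorem HasDerivAt.ringInverse {𝕜 R : Type*} [NontriviallyNormedField 𝕜] [NormedRing R]
    [HasSummableGeomSeries R] [NormedAlgebra 𝕜 R] {f : 𝕜 → R} {f' : R} {x : 𝕜}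
    (hf : HasDerivAt f f' x) (hx : IsUnit (f x)) :
    HasDerivAt (fun t => Ring.inverse (f t))
      (-(Ring.inverse (f x) * f' * Ring.inverse (f x))) x := by
  obtain ⟨u, hu⟩ := hx
  have h := hasFDerivAt_ringInverse (𝕜 := 𝕜) u
  rw [hu] at h
  simpa [← hu, Function.comp_def] using h.comp_hasDerivAt x hf

theorem Matrix.hasDerivAt_iff [Fintype m] [Fintype n] {𝕜 E : Type*} [NontriviallyNormedField 𝕜]
    [NormedAddCommGroup E] [NormedSpace 𝕜 E] {f : 𝕜 → Matrix m n E} {f' : Matrix m n E}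
    {x : 𝕜} :
    HasDerivAt f f' x ↔ ∀ i j, HasDerivAt (fun t => f t i j) (f' i j) x := by
  let e : Matrix m n E ≃L[𝕜] (m → n → E) :=
    { (Matrix.ofLinearEquiv 𝕜).symm with
      continuous_toFun := continuous_id
      continuous_invFun := continuous_id }
  refine ⟨fun h i j => ?_, fun h => ?_⟩
  · exact hasDerivAt_pi.1 (hasDerivAt_pi.1 (e.hasFDerivAt.comp_hasDerivAt x h) i) j
  · have he : HasDerivAt (e ∘ f) (e f') x := hasDerivAt_pi.2 fun i => hasDerivAt_pi.2 (h i)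
    exact e.symm.hasFDerivAt.comp_hasDerivAt x he

theorem HasDerivAt.matrix_conjTranspose [Fintype m] [Fintype n] {E : Type*}
    [NormedAddCommGroup E] [NormedSpace ℝ E] [StarAddMonoid E] [StarModule ℝ E] [ContinuousStar E]
    {f : ℝ → Matrix m n E} {f' : Matrix m n E} {x : ℝ} (hf : HasDerivAt f f' x) :
    HasDerivAt (fun t => (f t)ᴴ) f'ᴴ x :=
  Matrix.hasDerivAt_iff.2 fun i j => (Matrix.hasDerivAt_iff.1 hf j i).star

theorem HasDerivAt.matrix_mul_inv_one_add_mul [Fintype n] [DecidableEq n] {𝕜 : Type*}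
    [RCLike 𝕜] {S : ℝ → Matrix n n 𝕜} {S' : Matrix n n 𝕜} {x : ℝ} (A : Matrix n n 𝕜)
    (hS : HasDerivAt S S' x) (hx : (1 + S x * A).det ≠ 0) :
    HasDerivAt (fun t => A * (1 + S t * A)⁻¹)
      (-(A * (1 + S x * A)⁻¹ * S' * (A * (1 + S x * A)⁻¹))) x := by
  simp only [nonsing_inv_eq_ringInverse]
  have hu : IsUnit (1 + S x * A) := (isUnit_iff_isUnit_det _).2 hx.isUnit
  have h := (((hS.mul_const A).const_add 1).ringInverse hu).const_mul A
  refine HasDerivAt.congr_deriv (f := fun t => A * Ring.inverse (1 + S t * A)) h ?_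
  noncomm_ring

theorem Matrix.hasDerivAt_of_apply_eq_integral [Fintype m] [Fintype n] {E : Type*}
    [NormedAddCommGroup E] [NormedSpace ℝ E] [CompleteSpace E] {F g : ℝ → Matrix m n E} {a : ℝ}
    (hg : Continuous g) (hF : ∀ x i j, F x i j = ∫ t in a..x, g t i j) (x : ℝ) :
    HasDerivAt F (g x) x := by
  refine hasDerivAt_iff.2 fun i j => ?_
  rw [show (fun t => F t i j) = fun x => ∫ t in a..x, g t i j from funext fun t => hF t i j]
  exact ((hg.matrix_elem i j).integral_hasStrictDerivAt a x).hasDerivAt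

theorem Matrix.integral_apply_eq_integral_apply_sub_of_hasDerivAt [Fintype m] [Fintype n]
    {E : Type*} [NormedAddCommGroup E] [NormedSpace ℝ E] [CompleteSpace E]
    {F f g : ℝ → Matrix m n E} {a b : ℝ} (hF : ∀ t ∈ Set.uIcc a b, HasDerivAt F (f t - g t) t)
    (hf : ContinuousOn f (Set.uIcc a b)) (hg : ContinuousOn g (Set.uIcc a b)) (hFa : F a = 0)
    (i : m) (j : n) :
    ∫ t in a..b, g t i j = (∫ t in a..b, f t i j) - F b i j := by
  have hfi : IntervalIntegrable (fun t => f t i j) MeasureTheory.volume a b :=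
    ((continuous_apply_apply i j).comp_continuousOn hf).intervalIntegrable
  have hgi : IntervalIntegrable (fun t => g t i j) MeasureTheory.volume a b :=
    ((continuous_apply_apply i j).comp_continuousOn hg).intervalIntegrable
  have hFTC := intervalIntegral.integral_eq_sub_of_hasDerivAt
    (fun t ht => hasDerivAt_iff.1 (hF t ht) i j) (hfi.sub hgi)
  simp only [sub_apply] at hFTC
  rw [intervalIntegral.integral_sub hfi hgi, hFa, zero_apply, sub_zero] at hFTC
  rw [← hFTC, sub_sub_cancel]

theorem Matrix.isHermitian_of_apply_eq_integral {𝕜 : Type*} [RCLike 𝕜] {F : Matrix n n 𝕜}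
    {g : ℝ → Matrix n n 𝕜} {a b : ℝ} (hg : ∀ t, (g t).IsHermitian)
    (hF : ∀ i j, F i j = ∫ t in a..b, g t i j) : F.IsHermitian := by
  ext i j
  simp only [conjTranspose_apply, hF, RCLike.star_def, ← intervalIntegral.intervalIntegral_conj]
  simp only [← RCLike.star_def, (hg _).apply]

theorem Matrix.IsHermitian.mul_inv_one_add_mul [Fintype n] {α : Type*} [CommRing α] [StarRing α]
    [DecidableEq n] {A S : Matrix n n α} (hA : A.IsHermitian) (hS : S.IsHermitian)
    (h : IsUnit (1 + S * A).det) :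
    (A * (1 + S * A)⁻¹).IsHermitian := by
  have h' : IsUnit (1 + A * S).det := by rwa [det_one_add_mul_comm]
  have push : (1 + A * S) * A = A * (1 + S * A) := by noncomm_ring
  rw [IsHermitian, conjTranspose_mul, conjTranspose_nonsing_inv, conjTranspose_add,
    conjTranspose_one, conjTranspose_mul, hS.eq, hA.eq,
    ← nonsing_inv_mul_cancel_left _ (A * (1 + S * A)⁻¹) h', ← Matrix.mul_assoc (1 + A * S), push,
    Matrix.mul_assoc, mul_nonsing_inv _ h, Matrix.mul_one]

theorem Matrix.hasDerivAt_conjTranspose_mul_mul_darboux [Fintype n] [DecidableEq n] {𝕜 : Type*}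
    [RCLike 𝕜] {φ ψ : Matrix n n 𝕜} {T K : ℝ → Matrix n n 𝕜} {x : ℝ}
    (hT : HasDerivAt T (ψᴴ * φ) x) (hK : HasDerivAt K (-(K x * (ψᴴ * ψ) * K x)) x)
    (hKx : (K x).IsHermitian) :
    HasDerivAt (fun t => (T t)ᴴ * K t * T t)
      (φᴴ * φ - (φ - ψ * K x * T x)ᴴ * (φ - ψ * K x * T x)) x := by
  -- Naming the algebra lets the hypotheses, stated with the plain matrix instances, unify with
  -- the normed-ring ones.
  have h := HasDerivAt.mul (𝕜 := ℝ) (𝔸 := Matrix n n 𝕜)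
    (HasDerivAt.mul (𝕜 := ℝ) (𝔸 := Matrix n n 𝕜) hT.matrix_conjTranspose hK) hT
  refine HasDerivAt.congr_deriv (f := fun t => (T t)ᴴ * K t * T t) h ?_
  simp only [Pi.mul_apply, conjTranspose_sub, conjTranspose_mul, hKx.eq,
    conjTranspose_conjTranspose]
  noncomm_ring

theorem Matrix.integral_conjTranspose_mul_self_darboux [Fintype n] [DecidableEq n] {𝕜 : Type*}
    [RCLike 𝕜] {φ ψ T K : ℝ → Matrix n n 𝕜} {a b : ℝ} (hφ : ContinuousOn φ (Set.uIcc a b))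
    (hψ : ContinuousOn ψ (Set.uIcc a b))
    (hT : ∀ t ∈ Set.uIcc a b, HasDerivAt T ((ψ t)ᴴ * φ t) t)
    (hK : ∀ t ∈ Set.uIcc a b, HasDerivAt K (-(K t * ((ψ t)ᴴ * ψ t) * K t)) t)
    (hKh : ∀ t ∈ Set.uIcc a b, (K t).IsHermitian) (hTa : T a = 0) (i j : n) :
    ∫ t in a..b, ((φ t - ψ t * K t * T t)ᴴ * (φ t - ψ t * K t * T t)) i j
      = (∫ t in a..b, ((φ t)ᴴ * φ t) i j) - ((T b)ᴴ * K b * T b) i j := by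
  have hT_cont : ContinuousOn T (Set.uIcc a b) := fun t ht =>
    (hT t ht).continuousAt.continuousWithinAt
  have hK_cont : ContinuousOn K (Set.uIcc a b) := fun t ht =>
    (hK t ht).continuousAt.continuousWithinAt
  have hη : ContinuousOn (fun t => φ t - ψ t * K t * T t) (Set.uIcc a b) :=
    hφ.sub ((hψ.mul hK_cont).mul hT_cont)
  exact integral_apply_eq_integral_apply_sub_of_hasDerivAt
    (fun t ht => hasDerivAt_conjTranspose_mul_mul_darboux (hT t ht) (hK t ht) (hKh t ht))
    ((continuous_id.matrix_conjTranspose.comp_continuousOn hφ).mul hφ)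
    ((continuous_id.matrix_conjTranspose.comp_continuousOn hη).mul hη) (by simp [hTa]) i j

theorem stmt15_general {N : ℕ}
    (φ φd : ℂ → ℝ → Matrix (Fin N) (Fin N) ℂ)
    (hde1 : ∀ (l : ℂ) (x : ℝ) (i j : Fin N),
      HasDerivAt (fun t => φ l t i j) (φd l x i j) x)
    (lam : ℝ)
    (Sx : ℝ → Matrix (Fin N) (Fin N) ℂ)
    (hSx : ∀ (x : ℝ) (i j : Fin N),
      Sx x i j = ∫ t in (0:ℝ)..x, ((φ (lam : ℂ) t)ᴴ * φ (lam : ℂ) t) i j)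
    (A : Matrix (Fin N) (Fin N) ℂ) (hA : A.IsHermitian)
    (hdet : ∀ x ∈ Set.Icc (0:ℝ) 1, (1 + Sx x * A).det ≠ 0)
    (K : ℝ → Matrix (Fin N) (Fin N) ℂ)
    (hK : ∀ x, K x = A * (1 + Sx x * A)⁻¹)
    (T : ℝ → ℂ → Matrix (Fin N) (Fin N) ℂ)
    (hT : ∀ (x : ℝ) (l : ℂ) (i j : Fin N),
      T x l i j = ∫ t in (0:ℝ)..x, ((φ (lam : ℂ) t)ᴴ * φ l t) i j)
    (η : ℂ → ℝ → Matrix (Fin N) (Fin N) ℂ)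
    (hη : ∀ (l : ℂ) (x : ℝ), η l x = φ l x - φ (lam : ℂ) x * K x * T x l) :
    ∀ x ∈ Set.Icc (0:ℝ) 1, ∀ (lr : ℝ) (i j : Fin N),
      (∫ t in (0:ℝ)..x, ((η (lr : ℂ) t)ᴴ * η (lr : ℂ) t) i j)
        = (∫ t in (0:ℝ)..x, ((φ (lr : ℂ) t)ᴴ * φ (lr : ℂ) t) i j)
          - ((T x (lr : ℂ))ᴴ * K x * T x (lr : ℂ)) i j := by
  intro x hx lr i j
  have hsub : Set.uIcc 0 x ⊆ Set.Icc 0 1 := by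
    rw [Set.uIcc_of_le hx.1]
    exact Set.Icc_subset_Icc_right hx.2
  have hφ (l : ℂ) : Continuous (φ l) :=
    continuous_matrix fun p q => continuous_iff_continuousAt.2 fun t => (hde1 l t p q).continuousAt
  have hgram (l l' : ℂ) : Continuous fun t => (φ l t)ᴴ * φ l' t :=
    (hφ l).matrix_conjTranspose.matrix_mul (hφ l')
  have hS' := Matrix.hasDerivAt_of_apply_eq_integral (hgram lam lam) hSx
  have hK' (t : ℝ) (ht : t ∈ Set.Icc (0:ℝ) 1) :
      HasDerivAt K (-(K t * ((φ lam t)ᴴ * φ lam t) * K t)) t := by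
    rw [show K = _ from funext hK]
    exact (hS' t).matrix_mul_inv_one_add_mul A (hdet t ht)
  have hKh (t : ℝ) (ht : t ∈ Set.Icc (0:ℝ) 1) : (K t).IsHermitian := by
    rw [hK]
    exact hA.mul_inv_one_add_mul (Matrix.isHermitian_of_apply_eq_integral
      (fun s => Matrix.isHermitian_conjTranspose_mul_self _) (hSx t)) (hdet t ht).isUnit
  simp only [hη]
  exact Matrix.integral_conjTranspose_mul_self_darboux (hφ lr).continuousOn (hφ lam).continuousOn
    (fun t _ => Matrix.hasDerivAt_of_apply_eq_integral (hgram lam lr) (fun s => hT s lr) t)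
    (fun t ht => hK' t (hsub ht)) (fun t ht => hKh t (hsub ht)) (by ext; simp [hT]) i j

/-- In the setting of the Darboux transform, with
`η(x,λ) = φ(x,λ) - φ_α(x) K(x) T(x,λ)` and `T(x,λ) = ∫₀ˣ φ_α* φ(·,λ) dt`, the
transformed Gram matrix satisfies
`∫₀ˣ η*(t,λ) η(t,λ) dt = ∫₀ˣ φ*(t,λ) φ(t,λ) dt - T*(x,λ) K(x) T(x,λ)`
for all `x ∈ [0,1]` and real `λ`. -/
theorem stmt15 {N : ℕ}
    (V : ℝ → Matrix (Fin N) (Fin N) ℂ) (hV : ∀ x, (V x).IsHermitian)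
    (φ φd : ℂ → ℝ → Matrix (Fin N) (Fin N) ℂ)
    (hφ0 : ∀ l, φ l 0 = 0) (hφd0 : ∀ l, φd l 0 = 1)
    (hde1 : ∀ (l : ℂ) (x : ℝ) (i j : Fin N),
      HasDerivAt (fun t => φ l t i j) (φd l x i j) x)
    (hde2 : ∀ (l : ℂ) (x : ℝ) (i j : Fin N),
      HasDerivAt (fun t => φd l t i j) ((V x * φ l x - l • φ l x) i j) x)
    (lam : ℝ)
    (Sx : ℝ → Matrix (Fin N) (Fin N) ℂ)
    (hSx : ∀ (x : ℝ) (i j : Fin N),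
      Sx x i j = ∫ t in (0:ℝ)..x, ((φ (lam : ℂ) t)ᴴ * φ (lam : ℂ) t) i j)
    (A : Matrix (Fin N) (Fin N) ℂ) (hA : A.IsHermitian)
    (hdet : ∀ x ∈ Set.Icc (0:ℝ) 1, (1 + Sx x * A).det ≠ 0)
    (K : ℝ → Matrix (Fin N) (Fin N) ℂ)
    (hK : ∀ x, K x = A * (1 + Sx x * A)⁻¹)
    (T : ℝ → ℂ → Matrix (Fin N) (Fin N) ℂ)
    (hT : ∀ (x : ℝ) (l : ℂ) (i j : Fin N),
      T x l i j = ∫ t in (0:ℝ)..x, ((φ (lam : ℂ) t)ᴴ * φ l t) i j)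
    (η : ℂ → ℝ → Matrix (Fin N) (Fin N) ℂ)
    (hη : ∀ (l : ℂ) (x : ℝ), η l x = φ l x - φ (lam : ℂ) x * K x * T x l) :
    ∀ x ∈ Set.Icc (0:ℝ) 1, ∀ (lr : ℝ) (i j : Fin N),
      (∫ t in (0:ℝ)..x, ((η (lr : ℂ) t)ᴴ * η (lr : ℂ) t) i j)
        = (∫ t in (0:ℝ)..x, ((φ (lr : ℂ) t)ᴴ * φ (lr : ℂ) t) i j)
          - ((T x (lr : ℂ))ᴴ * K x * T x (lr : ℂ)) i j :=
  stmt15_general φ φd hde1 lam Sx hSx A hA hdet K hK T hT η hη
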